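/- Let α = (p_1, ..., p_l) be a partition of n with l ≥ 1 parts and g ≥ 1. A tree built from the shrunk partition α_g as follows (a root r', a child r'_g of r', a star with i leaves attached to r'_g for each grouped part i of α_g, and a star with i leaves attached directly to r' for each ungrouped part i of α_g) has at most n·(1 + 1/g) + g + 2 vertices. -/
import Mathlib

/-- The shrunk partition: group the first `g * (l / g)` parts into consecutive
blocks of `g` parts and sum each block; keep the remaining `l mod g` parts. -/
def shrinkPartition (g : ℕ) (L : List ℕ) : List ℕ :=
  ((L.take (g * (L.length / g))).toChunks g).map List.sum ++ L.drop (g * (L.length / g))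

private lemma go_len {α : Type*} (c : ℕ) (hc : 1 ≤ c) :
    ∀ (xs : List α) (acc₁ : Array α) (acc₂ : Array (List α)),
      1 ≤ acc₁.size → acc₁.size ≤ c →
      (List.toChunks.go c xs acc₁ acc₂).length ≤
        acc₂.size + 1 + (xs.length + acc₁.size - 1) / c
  | [], acc₁, acc₂, _, _ => by
    simp [List.toChunks.go]
  | x :: xs, acc₁, acc₂, h1, h2 => by
    rw [List.toChunks.go]
    by_cases h : acc₁.size = c
    · simp only [h, beq_self_eq_true, if_true]
      have := go_len c hc xs ((Array.mkEmpty c).push x) (acc₂.push acc₁.toList)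
        (by simp) (by simpa using hc)
      have hs : ((Array.mkEmpty c (α := α)).push x).size = 1 := by simp
      rw [hs, Nat.add_sub_cancel] at this
      simp only [Array.size_push] at this
      refine this.trans ?_
      have hd : ((x :: xs).length + c - 1) / c = xs.length / c + 1 := by
        rw [show (x :: xs).length + c - 1 = xs.length + c by
            simp only [List.length_cons]; omega,
          Nat.add_div_right _ (show 0 < c by omega)]
      rw [hd]
      omega
    · simp only [beq_iff_eq, h, if_false]
      have := go_len c hc xs (acc₁.push x) acc₂ (by simp) (by simp; omega)
      refine this.trans ?_
      simp only [Array.size_push, List.length_cons]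
      have : xs.length + (acc₁.size + 1) - 1 = xs.length + 1 + acc₁.size - 1 := by omega
      rw [this]

private lemma toChunks_len {α : Type*} (g : ℕ) (hg : 1 ≤ g) (M : List α) :
    (M.toChunks g).length ≤ 1 + (M.length - 1) / g := by
  match g, hg, M with
  | _, _, [] => simp [List.toChunks]
  | g + 1, _, x :: xs =>
    show (List.toChunks.go (g + 1) xs #[x] #[]).length ≤ _
    have := go_len (g + 1) (by omega) xs #[x] #[] (by simp) (by simp)
    simpa using this

/-- The tree built from the shrunk partition `α_g` — a root `r'`, a child `r'_g`,
one star center per part of `α_g`, and `n` leaves in total — has at most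
`n·(1 + 1/g) + g + 2` vertices. -/
theorem stmt_4 (n g : ℕ) (hg : 1 ≤ g) (L : List ℕ) (hl : 1 ≤ L.length)
    (hpos : ∀ x ∈ L, 0 < x) (hsum : L.sum = n) :
    2 + (shrinkPartition g L).length + n ≤ n + n / g + g + 2 := by
  set l := L.length with hldef
  have hln : l ≤ n := hsum ▸ List.length_le_sum_of_one_le L hpos
  have hmd := Nat.mod_add_div l g
  have hmodlt : l % g < g := Nat.mod_lt _ hg
  have hdiv : l / g ≤ n / g := Nat.div_le_div_right hln
  unfold shrinkPartition
  rw [List.length_append, List.length_map, List.length_drop, ← hldef]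
  have htake : (L.take (g * (l / g))).length = g * (l / g) := by
    rw [List.length_take, ← hldef]
    exact min_eq_left (by omega)
  have hchunks : ((L.take (g * (l / g))).toChunks g).length ≤ l / g := by
    rcases Nat.eq_zero_or_pos (l / g) with h0 | h0
    · have : L.take (g * (l / g)) = [] := by
        rw [h0, Nat.mul_zero, List.take_zero]
      rw [this]
      simp [List.toChunks]
    · have hb := toChunks_len g hg (L.take (g * (l / g)))
      rw [htake] at hb
      refine hb.trans ?_
      obtain ⟨k, hk⟩ : ∃ k, l / g = k + 1 := ⟨l / g - 1, by omega⟩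
      have hmul : g * (k + 1) = g * k + g := Nat.mul_succ g k
      have hnum : g * (l / g) - 1 = (g - 1) + g * k := by rw [hk]; omega
      rw [hnum, Nat.add_mul_div_left _ _ (show 0 < g by omega),
        Nat.div_eq_of_lt (by omega)]
      omega
  omega
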